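/- If F is the cdf of a random variable with finite first absolute moment, then for every r ≥ 2 the function x ↦ K_r(F(x)) is Lebesgue-integrable on ℝ, i.e. ∫_ℝ |K_r(F(x))| dx < ∞, where K_r is the integrated shifted Legendre polynomial. In particular there is a constant C > 0 with |K_r(t)| ≤ C t(1-t) for all t ∈ [0,1]. -/

import Mathlib

open MeasureTheory Set
open scoped ENNReal

/-- The shifted Legendre polynomial of order `m`. -/
def shiftedLegendre (m : ℕ) (t : ℝ) : ℝ :=
  ∑ k ∈ Finset.range (m + 1),
    (-1 : ℝ) ^ k * (Nat.choose m k : ℝ) ^ 2 * t ^ (m - k) * (1 - t) ^ k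

/-- The integrated shifted Legendre polynomial `K_r(t) = ∫_0^t L_{r-1}(u) du`. -/
noncomputable def intShiftedLegendre (r : ℕ) (t : ℝ) : ℝ :=
  ∫ u in (0:ℝ)..t, shiftedLegendre (r - 1) u


lemma beta_nat (b : ℕ) : ∀ a : ℕ, ∫ t in (0:ℝ)..1, t ^ a * (1 - t) ^ b
    = (Nat.factorial a * Nat.factorial b : ℝ) / Nat.factorial (a + b + 1) := by
  induction b with
  | zero =>
    intro a
    simp only [pow_zero, mul_one, integral_pow, one_pow, Nat.factorial, Nat.add_zero]
    rw [eq_div_iff (by positivity)]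
    push_cast [Nat.factorial_succ]
    field_simp
    simp
  | succ b ih =>
    intro a
    have hne : ((a:ℝ) + 1) ≠ 0 := by positivity
    have hIBP := intervalIntegral.integral_mul_deriv_eq_deriv_mul
      (u := fun t : ℝ => (1 - t) ^ (b + 1)) (u' := fun t : ℝ => -(((b:ℝ)+1) * (1 - t) ^ b))
      (v := fun t : ℝ => t ^ (a + 1) / ((a:ℝ) + 1)) (v' := fun t : ℝ => t ^ a)
      (a := (0:ℝ)) (b := 1)
      (fun t _ => by
        have h1 : HasDerivAt (fun t : ℝ => 1 - t) (-1) t := by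
          simpa using (hasDerivAt_id t).const_sub (1:ℝ)
        have := h1.fun_pow (b+1)
        simpa [mul_comm, mul_assoc, mul_left_comm] using this)
      (fun t _ => by
        have := (hasDerivAt_pow (a+1) t).div_const ((a:ℝ)+1)
        simp only [Nat.cast_add, Nat.cast_one, Nat.add_sub_cancel] at this
        convert this using 1
        field_simp)
      (by apply Continuous.intervalIntegrable; continuity)
      (by apply Continuous.intervalIntegrable; continuity)
    have key : ∫ t in (0:ℝ)..1, t ^ a * (1 - t) ^ (b+1)
        = (((b:ℝ)+1) / ((a:ℝ)+1)) * ∫ t in (0:ℝ)..1, t ^ (a+1) * (1 - t) ^ b := by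
      rw [show (fun t : ℝ => t ^ a * (1 - t) ^ (b+1)) = fun t : ℝ => (1-t)^(b+1) * t ^ a from by
        funext t; ring]
      rw [hIBP]
      simp only [one_pow, sub_self, zero_pow (Nat.succ_ne_zero _), zero_mul, mul_zero,
        zero_div, mul_one, sub_zero, zero_sub, zero_mul]
      have : (∫ x in (0:ℝ)..1, -(((b:ℝ) + 1) * (1 - x) ^ b) * (x ^ (a + 1) / ((a:ℝ) + 1)))
          = - ∫ x in (0:ℝ)..1, (((b:ℝ)+1)/((a:ℝ)+1)) * (x^(a+1)*(1-x)^b) := by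
        rw [← intervalIntegral.integral_neg]
        congr 1; funext x; field_simp
      rw [this, intervalIntegral.integral_const_mul]
      ring
    rw [key, ih (a+1)]
    rw [show a+1+b+1 = a+(b+1)+1 from by omega]
    have h2 : (Nat.factorial (a+(b+1)+1) : ℝ) ≠ 0 := by positivity
    push_cast [Nat.factorial_succ]
    field_simp

lemma continuous_shiftedLegendre (m : ℕ) : Continuous (shiftedLegendre m) := by
  unfold shiftedLegendre
  exact continuous_finset_sum _ fun k _ => by fun_prop

lemma legendre_integral_zero (m : ℕ) (hm : 1 ≤ m) :
    ∫ t in (0:ℝ)..1, shiftedLegendre m t = 0 := by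
  unfold shiftedLegendre
  rw [intervalIntegral.integral_finset_sum (fun k _ =>
    (Continuous.intervalIntegrable (by continuity) _ _))]
  have step : ∀ k ∈ Finset.range (m+1),
      (∫ t in (0:ℝ)..1, (-1:ℝ) ^ k * (Nat.choose m k : ℝ) ^ 2 * t ^ (m - k) * (1 - t) ^ k)
      = ((Nat.factorial m : ℝ) / (Nat.factorial (m+1))) * ((-1:ℝ)^k * (Nat.choose m k : ℝ)) := by
    intro k hk
    have hkm : k ≤ m := Nat.lt_succ_iff.mp (Finset.mem_range.mp hk)
    have : (fun t : ℝ => (-1:ℝ) ^ k * (Nat.choose m k : ℝ) ^ 2 * t ^ (m - k) * (1 - t) ^ k)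
        = fun t : ℝ => ((-1:ℝ) ^ k * (Nat.choose m k : ℝ) ^ 2) * (t ^ (m - k) * (1 - t) ^ k) := by
      funext t; ring
    rw [this, intervalIntegral.integral_const_mul, beta_nat, show m - k + k + 1 = m + 1 by omega]
    have hfac : (Nat.choose m k : ℝ) * ((Nat.factorial (m-k) : ℝ) * (Nat.factorial k : ℝ))
        = (Nat.factorial m : ℝ) := by
      rw [← Nat.cast_mul, ← Nat.cast_mul, ← Nat.choose_mul_factorial_mul_factorial hkm]
      push_cast; ring
    have h1 : ((Nat.choose m k : ℝ))^2 * ((Nat.factorial (m-k) : ℝ) * (Nat.factorial k : ℝ))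
        = (Nat.choose m k : ℝ) * (Nat.factorial m : ℝ) := by
      rw [pow_two, mul_assoc, hfac]
    field_simp
    linear_combination h1
  rw [Finset.sum_congr rfl step, ← Finset.mul_sum]
  have halt : ∑ k ∈ Finset.range (m+1), ((-1:ℝ)^k * (Nat.choose m k : ℝ)) = 0 := by
    have := Int.alternating_sum_range_choose (n := m)
    rw [if_neg (by omega)] at this
    have := congrArg (fun z : ℤ => (z : ℝ)) this
    push_cast at this
    simpa using this
  rw [halt, mul_zero]

lemma continuous_intShiftedLegendre (r : ℕ) : Continuous (intShiftedLegendre r) :=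
  intervalIntegral.continuous_primitive
    (fun a b => ((continuous_shiftedLegendre _).intervalIntegrable a b)) 0

lemma shiftedLegendre_bound (m : ℕ) {u : ℝ} (hu : u ∈ Icc (0:ℝ) 1) :
    |shiftedLegendre m u| ≤ ∑ k ∈ Finset.range (m+1), ((Nat.choose m k : ℝ))^2 := by
  unfold shiftedLegendre
  refine (Finset.abs_sum_le_sum_abs _ _).trans (Finset.sum_le_sum fun k _ => ?_)
  obtain ⟨h0, h1⟩ := hu
  have hu1 : |u| ≤ 1 := by rw [abs_le]; constructor <;> linarith
  have hu2 : |1 - u| ≤ 1 := by rw [abs_le]; constructor <;> linarith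
  rw [abs_mul, abs_mul, abs_mul, abs_pow, abs_pow, abs_pow, abs_neg, abs_one, one_pow, one_mul,
    abs_pow]
  calc (|(Nat.choose m k : ℝ)|)^2 * |u| ^ (m-k) * |1-u| ^ k
      ≤ (|(Nat.choose m k : ℝ)|)^2 * 1 * 1 := by
        apply mul_le_mul
        · exact mul_le_mul le_rfl (pow_le_one₀ (abs_nonneg _) hu1) (by positivity) (by positivity)
        · exact pow_le_one₀ (abs_nonneg _) hu2
        · positivity
        · positivity
    _ = ((Nat.choose m k : ℝ))^2 := by rw [mul_one, mul_one, sq_abs]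

lemma intShiftedLegendre_bound (r : ℕ) (hr : 2 ≤ r) :
    ∃ C > (0:ℝ), ∀ t ∈ Icc (0:ℝ) 1, |intShiftedLegendre r t| ≤ C * (t * (1 - t)) := by
  set m := r - 1 with hm
  have hm1 : 1 ≤ m := by omega
  set M : ℝ := ∑ k ∈ Finset.range (m+1), ((Nat.choose m k : ℝ))^2 with hM
  have hMpos : 0 < M := by
    rw [hM]
    apply Finset.sum_pos' (fun k _ => by positivity)
    exact ⟨0, Finset.mem_range.mpr (by omega), by simp⟩
  refine ⟨2 * M, by positivity, fun t ht => ?_⟩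
  obtain ⟨h0, h1⟩ := ht
  have hIi : ∀ a b : ℝ, a ∈ Icc (0:ℝ) 1 → b ∈ Icc (0:ℝ) 1 →
      |∫ u in a..b, shiftedLegendre m u| ≤ M * |b - a| := by
    intro a b ha hb
    rw [← Real.norm_eq_abs]
    apply intervalIntegral.norm_integral_le_of_norm_le_const
    intro x hx
    have : x ∈ Icc (0:ℝ) 1 := by
      rcases le_total a b with h | h
      · rw [uIoc_of_le h] at hx
        exact ⟨le_trans ha.1 (le_of_lt hx.1), le_trans hx.2 hb.2⟩
      · rw [uIoc_of_ge h] at hx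
        exact ⟨le_trans hb.1 (le_of_lt hx.1), le_trans hx.2 ha.2⟩
    simpa using shiftedLegendre_bound m this
  have b1 : |intShiftedLegendre r t| ≤ M * t := by
    have := hIi 0 t ⟨le_rfl, zero_le_one⟩ ⟨h0, h1⟩
    simpa [intShiftedLegendre, ← hm, abs_of_nonneg h0] using this
  have b2 : |intShiftedLegendre r t| ≤ M * (1 - t) := by
    have hsplit : intShiftedLegendre r t + ∫ u in t..1, shiftedLegendre m u = 0 := by
      rw [show intShiftedLegendre r t = ∫ u in (0:ℝ)..t, shiftedLegendre m u from rfl]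
      rw [intervalIntegral.integral_add_adjacent_intervals
        ((continuous_shiftedLegendre m).intervalIntegrable _ _)
        ((continuous_shiftedLegendre m).intervalIntegrable _ _)]
      exact legendre_integral_zero m hm1
    have : intShiftedLegendre r t = -∫ u in t..1, shiftedLegendre m u := by linarith
    rw [this, abs_neg]
    have := hIi t 1 ⟨h0, h1⟩ ⟨zero_le_one, le_rfl⟩
    simpa [abs_of_nonneg (by linarith : (0:ℝ) ≤ 1 - t)] using this
  rcases le_total t (1/2) with h | h
  · calc |intShiftedLegendre r t| ≤ M * t := b1
      _ ≤ 2 * M * (t * (1 - t)) := by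
        nlinarith [mul_nonneg (mul_nonneg hMpos.le h0) (show (0:ℝ) ≤ 1 - 2*t by linarith)]
  · calc |intShiftedLegendre r t| ≤ M * (1 - t) := b2
      _ ≤ 2 * M * (t * (1 - t)) := by
        nlinarith [mul_nonneg (mul_nonneg hMpos.le (show (0:ℝ) ≤ 1 - t by linarith))
          (show (0:ℝ) ≤ 2*t - 1 by linarith)]

lemma left_tail (μ : Measure ℝ) [IsProbabilityMeasure μ]
    (hmom : Integrable (fun x : ℝ => |x|) μ) :
    ∫⁻ x in Iic (0:ℝ), μ (Iic x) < ⊤ := by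
  set s : Set (ℝ × ℝ) := {p : ℝ × ℝ | p.2 ≤ p.1} with hsdef
  have hs : MeasurableSet s := measurableSet_le measurable_snd measurable_fst
  have k1 : ∫⁻ x in Iic (0:ℝ), μ (Iic x) = ((volume.restrict (Iic (0:ℝ))).prod μ) s := by
    rw [Measure.prod_apply hs]
    exact lintegral_congr fun x => by congr 1
  have k2 : ((volume.restrict (Iic (0:ℝ))).prod μ) s = ∫⁻ y, volume (Ici y ∩ Iic 0) ∂μ := by
    rw [Measure.prod_apply_symm hs]
    refine lintegral_congr fun y => ?_
    rw [show (fun x => (x, y)) ⁻¹' s = Ici y from by ext x; simp [hsdef],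
      Measure.restrict_apply measurableSet_Ici]
  rw [k1, k2]
  have hb : ∫⁻ y, volume (Ici y ∩ Iic 0) ∂μ ≤ ∫⁻ y, ENNReal.ofReal |y| ∂μ := by
    refine lintegral_mono fun y => ?_
    rw [Ici_inter_Iic, Real.volume_Icc]
    exact ENNReal.ofReal_le_ofReal (by rw [zero_sub]; exact neg_le_abs y)
  refine lt_of_le_of_lt hb ?_
  have := hmom.hasFiniteIntegral
  rwa [hasFiniteIntegral_iff_ofReal (ae_of_all _ fun x => abs_nonneg x)] at this

lemma right_tail (μ : Measure ℝ) [IsProbabilityMeasure μ]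
    (hmom : Integrable (fun x : ℝ => |x|) μ) :
    ∫⁻ x in Ioi (0:ℝ), μ (Ioi x) < ⊤ := by
  set s : Set (ℝ × ℝ) := {p : ℝ × ℝ | p.1 < p.2} with hsdef
  have hs : MeasurableSet s := measurableSet_lt measurable_fst measurable_snd
  have k1 : ∫⁻ x in Ioi (0:ℝ), μ (Ioi x) = ((volume.restrict (Ioi (0:ℝ))).prod μ) s := by
    rw [Measure.prod_apply hs]
    exact lintegral_congr fun x => by congr 1
  have k2 : ((volume.restrict (Ioi (0:ℝ))).prod μ) s = ∫⁻ y, volume (Iio y ∩ Ioi 0) ∂μ := by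
    rw [Measure.prod_apply_symm hs]
    refine lintegral_congr fun y => ?_
    rw [show (fun x => (x, y)) ⁻¹' s = Iio y from by ext x; simp [hsdef],
      Measure.restrict_apply measurableSet_Iio]
  rw [k1, k2]
  have hb : ∫⁻ y, volume (Iio y ∩ Ioi 0) ∂μ ≤ ∫⁻ y, ENNReal.ofReal |y| ∂μ := by
    refine lintegral_mono fun y => ?_
    rw [Iio_inter_Ioi, Real.volume_Ioo]
    exact ENNReal.ofReal_le_ofReal (by rw [sub_zero]; exact le_abs_self y)
  refine lt_of_le_of_lt hb ?_
  have := hmom.hasFiniteIntegral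
  rwa [hasFiniteIntegral_iff_ofReal (ae_of_all _ fun x => abs_nonneg x)] at this

/-- If `F` is the cdf of a distribution with finite first absolute moment, then for `r ≥ 2`
the function `x ↦ K_r(F(x))` is Lebesgue integrable on `ℝ`; in particular there is `C > 0`
with `|K_r(t)| ≤ C t (1 - t)` for all `t ∈ [0,1]`. -/
theorem intShiftedLegendre_comp_cdf_integrable
    (r : ℕ) (hr : 2 ≤ r) (μ : Measure ℝ) [IsProbabilityMeasure μ]
    (hmom : Integrable (fun x : ℝ => |x|) μ)
    (F : ℝ → ℝ) (hF : ∀ x, F x = (μ (Iic x)).toReal) :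
    (∃ C > (0:ℝ), ∀ t ∈ Icc (0:ℝ) 1, |intShiftedLegendre r t| ≤ C * (t * (1 - t))) ∧
    Integrable (fun x => intShiftedLegendre r (F x)) volume := by
  obtain ⟨C, hC, hbound⟩ := intShiftedLegendre_bound r hr
  refine ⟨⟨C, hC, hbound⟩, ?_⟩
  have hF0 : ∀ x, 0 ≤ F x := fun x => by rw [hF]; exact ENNReal.toReal_nonneg
  have hFle : ∀ x, F x ≤ 1 := by
    intro x
    rw [hF]
    have h1 := prob_le_one (μ := μ) (s := Iic x)
    calc (μ (Iic x)).toReal ≤ (1 : ℝ≥0∞).toReal :=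
          ENNReal.toReal_mono (by simp) h1
      _ = 1 := by simp
  have hFmono : Monotone F := fun a b hab => by
    rw [hF, hF]
    exact ENNReal.toReal_mono (measure_ne_top μ _) (measure_mono (Iic_subset_Iic.mpr hab))
  have hFmeas : Measurable F := hFmono.measurable
  have hofReal : ∀ x, ENNReal.ofReal (F x) = μ (Iic x) := fun x => by
    rw [hF, ENNReal.ofReal_toReal (measure_ne_top μ _)]
  have hofReal2 : ∀ x, ENNReal.ofReal (1 - F x) = μ (Ioi x) := by
    intro x
    have hcompl : μ (Ioi x) = 1 - μ (Iic x) := by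
      rw [← compl_Iic, prob_compl_eq_one_sub measurableSet_Iic]
    rw [hF, hcompl, ENNReal.ofReal_sub _ ENNReal.toReal_nonneg,
      ENNReal.ofReal_toReal (measure_ne_top μ _), ENNReal.ofReal_one]
  set g : ℝ → ℝ := fun x => F x * (1 - F x) with hg_def
  have hg0 : ∀ x, 0 ≤ g x := fun x =>
    mul_nonneg (hF0 x) (sub_nonneg.mpr (hFle x))
  have hg : Integrable g volume := by
    constructor
    · exact (hFmeas.mul (measurable_const.sub hFmeas)).aestronglyMeasurable
    · rw [hasFiniteIntegral_iff_ofReal (ae_of_all _ hg0)]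
      have hsplit : ∫⁻ x, ENNReal.ofReal (g x) ∂volume
          = (∫⁻ x in Iic (0:ℝ), ENNReal.ofReal (g x) ∂volume)
            + ∫⁻ x in Ioi (0:ℝ), ENNReal.ofReal (g x) ∂volume := by
        rw [← compl_Iic, lintegral_add_compl _ measurableSet_Iic]
      rw [hsplit]
      have hleft : (∫⁻ x in Iic (0:ℝ), ENNReal.ofReal (g x) ∂volume) < ⊤ := by
        refine lt_of_le_of_lt (lintegral_mono fun x => ?_) (left_tail μ hmom)
        rw [← hofReal x]
        exact ENNReal.ofReal_le_ofReal
          (mul_le_of_le_one_right (hF0 x) (by linarith [hF0 x]))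
      have hright : (∫⁻ x in Ioi (0:ℝ), ENNReal.ofReal (g x) ∂volume) < ⊤ := by
        refine lt_of_le_of_lt (lintegral_mono fun x => ?_) (right_tail μ hmom)
        rw [← hofReal2 x]
        refine ENNReal.ofReal_le_ofReal ?_
        have h2 : g x = F x * (1 - F x) := rfl
        nlinarith [hF0 x, hFle x]
      exact ENNReal.add_lt_top.mpr ⟨hleft, hright⟩
  refine (hg.const_mul C).mono ?_ (ae_of_all _ fun x => ?_)
  · exact ((continuous_intShiftedLegendre r).measurable.comp hFmeas).aestronglyMeasurable
  · rw [Real.norm_eq_abs, Real.norm_eq_abs]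
    have h1 : |intShiftedLegendre r (F x)| ≤ C * (F x * (1 - F x)) :=
      hbound (F x) ⟨hF0 x, hFle x⟩
    calc |intShiftedLegendre r (F x)| ≤ C * (F x * (1 - F x)) := h1
      _ ≤ |C * g x| := le_abs_self _
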